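/- arXiv:2110.02324 — 2 statements merged into one kernel-verified Lean document; each statement's English description precedes it below -/
import Mathlib

section
/- Fix integers k and ℓ ≥ 0, define X_ℓ = {(z,w) ∈ ℂ² : |z| > √2, |w| < |z|^{-ℓ}} and the weight φ_k(z,w) = (1+|z|²+|w|²)^{-(k+3)}. Then for nonnegative integers p, q, the monomial z^p w^q satisfies ∫_{X_ℓ} |z|^{2p} |w|^{2q} φ_k(z,w) dλ(z,w) < ∞ if and only if p − ℓq ≤ k + ℓ + 1. -/
open MeasureTheory Complex Set Metric intervalIntegral
open scoped ENNReal

lemma measurable_zpow_real (m : ℤ) : Measurable fun x : ℝ => x ^ m := by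
  cases m with
  | ofNat n => simpa using measurable_id.pow_const n
  | negSucc n =>
      have : Measurable fun x : ℝ => (x ^ (n + 1))⁻¹ :=
        (measurable_id.pow_const (n + 1)).inv
      simpa [zpow_negSucc] using this

lemma lintegral_norm_complex (f : ℝ → ℝ≥0∞) (hf : Measurable f) :
    ∫⁻ z : ℂ, f ‖z‖ = (volume : Measure ℂ).toSphere univ *
      ∫⁻ r in Ioi (0 : ℝ), ENNReal.ofReal r * f r := by
  have h1 : ∫⁻ z : ℂ, f ‖z‖ = ∫⁻ z in ({(0:ℂ)}ᶜ), f ‖z‖ := by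
    rw [MeasureTheory.restrict_compl_singleton]
  rw [h1, ← lintegral_subtype_comap (measurableSet_singleton (0:ℂ)).compl (fun z => f ‖z‖)]
  have hmp := (volume : Measure ℂ).measurePreserving_homeomorphUnitSphereProd
  have hmeas : Measurable fun y : sphere (0:ℂ) 1 × Ioi (0:ℝ) => f y.2 :=
    hf.comp (measurable_subtype_coe.comp measurable_snd)
  have h2 : ∀ x : ({(0:ℂ)}ᶜ : Set ℂ),
      f ‖(x : ℂ)‖ = (fun y : sphere (0:ℂ) 1 × Ioi (0:ℝ) => f y.2)
        (homeomorphUnitSphereProd ℂ x) := by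
    intro x; simp
  simp only [h2]
  rw [MeasurePreserving.lintegral_comp hmp hmeas]
  rw [MeasureTheory.lintegral_prod _ hmeas.aemeasurable]
  simp only [lintegral_const]
  rw [mul_comm]
  congr 1
  have hd : Module.finrank ℝ ℂ - 1 = 1 := by
    rw [Complex.finrank_real_complex]
  rw [hd]
  have hden : Measurable fun r : Ioi (0:ℝ) => ENNReal.ofReal ((r : ℝ) ^ 1) := by fun_prop
  have hfs : Measurable fun r : Ioi (0:ℝ) => f (r : ℝ) := hf.comp measurable_subtype_coe
  rw [Measure.volumeIoiPow, lintegral_withDensity_eq_lintegral_mul _ hden hfs]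
  rw [← lintegral_subtype_comap measurableSet_Ioi
    (fun r : ℝ => ENNReal.ofReal r * f r)]
  congr 1 with r
  simp

lemma lintegral_Ioo_pow {R : ℝ} (hR : 0 ≤ R) (n : ℕ) :
    ∫⁻ r in Ioo (0:ℝ) R, ENNReal.ofReal (r ^ n)
      = ENNReal.ofReal (R ^ (n+1) / (n+1)) := by
  rw [Measure.restrict_congr_set Ioo_ae_eq_Ioc,
    ← ofReal_integral_eq_lintegral_ofReal (intervalIntegrable_pow n).1 ?_,
    ← integral_of_le hR]
  · rw [integral_pow]; norm_num
  · filter_upwards [ae_restrict_mem measurableSet_Ioc] with y hy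
    exact pow_nonneg hy.1.le _

lemma lintegral_Ioi_rpow_top_iff (t : ℝ) :
    (∫⁻ r in Ioi (Real.sqrt 2), ENNReal.ofReal (r ^ t) < ⊤) ↔ t < -1 := by
  have h2 : (0:ℝ) < Real.sqrt 2 := Real.sqrt_pos.2 two_pos
  have haesm : AEStronglyMeasurable (fun r : ℝ => r ^ t)
      (volume.restrict (Ioi (Real.sqrt 2))) := by
    refine ContinuousOn.aestronglyMeasurable ?_ measurableSet_Ioi
    intro x hx
    exact (Real.continuousAt_rpow_const x t (Or.inl (h2.trans hx).ne')).continuousWithinAt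
  have hnonneg : 0 ≤ᵐ[volume.restrict (Ioi (Real.sqrt 2))] fun r : ℝ => r ^ t := by
    filter_upwards [ae_restrict_mem measurableSet_Ioi] with y hy
    exact Real.rpow_nonneg (h2.trans hy).le _
  rw [← hasFiniteIntegral_iff_ofReal hnonneg]
  constructor
  · intro h
    have : IntegrableOn (fun r : ℝ => r ^ t) (Ioi (Real.sqrt 2)) := ⟨haesm, h⟩
    exact (integrableOn_Ioi_rpow_iff h2).1 this
  · intro h
    exact ((integrableOn_Ioi_rpow_iff h2).2 h).2

lemma sandwich_zpow {A B : ℝ} (hA : 0 < A) (h1 : A ≤ B) (h2 : B ≤ 2*A) (m : ℤ) :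
    B ^ m ≤ 2 ^ m.natAbs * A ^ m ∧ A ^ m ≤ 2 ^ m.natAbs * B ^ m := by
  have hB : 0 < B := hA.trans_le h1
  have key : ∀ n : ℕ, B ^ n ≤ 2 ^ n * A ^ n ∧ A ^ n ≤ B ^ n := by
    intro n
    constructor
    · calc B ^ n ≤ (2*A) ^ n := pow_le_pow_left₀ hB.le h2 n
        _ = 2 ^ n * A ^ n := mul_pow _ _ _
    · exact pow_le_pow_left₀ hA.le h1 n
  cases m with
  | ofNat n =>
      simp only [Int.ofNat_eq_coe, zpow_natCast, Int.natAbs_natCast]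
      refine ⟨(key n).1, ?_⟩
      calc A ^ n ≤ B ^ n := (key n).2
        _ ≤ 2 ^ n * B ^ n := le_mul_of_one_le_left (by positivity) (one_le_pow₀ one_le_two)
  | negSucc n =>
      set N := n + 1
      have hAN : (0:ℝ) < A ^ N := by positivity
      have hBN : (0:ℝ) < B ^ N := by positivity
      simp only [zpow_negSucc, Int.natAbs_negSucc]
      constructor
      · calc (B ^ N)⁻¹ ≤ (A ^ N)⁻¹ := by
              exact inv_anti₀ hAN (key N).2
          _ ≤ 2 ^ N * (A ^ N)⁻¹ :=
              le_mul_of_one_le_left (by positivity) (one_le_pow₀ one_le_two)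
      · show (A ^ N)⁻¹ ≤ 2 ^ N * (B ^ N)⁻¹
        rw [show (A^N)⁻¹ = 1/(A^N) by ring, show (2:ℝ)^N * (B^N)⁻¹ = 2^N/(B^N) by ring,
          div_le_div_iff₀ hAN hBN, one_mul]
        exact (key N).1

lemma lintegral_ball_norm_pow {R : ℝ} (hR : 0 ≤ R) (n : ℕ) :
    ∫⁻ w in ball (0:ℂ) R, ENNReal.ofReal (‖w‖ ^ n)
      = (volume : Measure ℂ).toSphere univ * ENNReal.ofReal (R ^ (n+2) / (n+2)) := by
  have hfm : Measurable ((Iio R).indicator (fun r : ℝ => ENNReal.ofReal (r ^ n))) :=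
    (by fun_prop : Measurable fun r : ℝ => ENNReal.ofReal (r^n)).indicator measurableSet_Iio
  have h1 : ∫⁻ w in ball (0:ℂ) R, ENNReal.ofReal (‖w‖^n)
      = ∫⁻ w : ℂ, ((Iio R).indicator fun r => ENNReal.ofReal (r^n)) ‖w‖ := by
    rw [← lintegral_indicator measurableSet_ball]
    congr 1 with w
    by_cases h : w ∈ ball (0:ℂ) R
    · rw [indicator_of_mem h, indicator_of_mem (by simpa [mem_ball_zero_iff] using h)]
    · rw [indicator_of_notMem h, indicator_of_notMem (by simpa [mem_ball_zero_iff] using h)]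
  rw [h1, lintegral_norm_complex _ hfm]
  congr 1
  have h2 : ∀ r : ℝ, ENNReal.ofReal r * (Iio R).indicator (fun r => ENNReal.ofReal (r^n)) r
      = (Iio R).indicator (fun r => ENNReal.ofReal r * ENNReal.ofReal (r^n)) r := by
    intro r
    by_cases h : r ∈ Iio R <;> simp [indicator_of_mem, indicator_of_notMem, h]
  simp only [h2]
  rw [lintegral_indicator measurableSet_Iio, Measure.restrict_restrict measurableSet_Iio,
    show Iio R ∩ Ioi (0:ℝ) = Ioo 0 R from by rw [inter_comm, Ioi_inter_Iio]]
  calc ∫⁻ r in Ioo (0:ℝ) R, ENNReal.ofReal r * ENNReal.ofReal (r^n)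
      = ∫⁻ r in Ioo (0:ℝ) R, ENNReal.ofReal (r^(n+1)) := by
        apply setLIntegral_congr_fun measurableSet_Ioo
        intro r hr
        dsimp only
        rw [← ENNReal.ofReal_mul hr.1.le, ← pow_succ']
    _ = ENNReal.ofReal (R^(n+2)/(n+2)) := by
        rw [lintegral_Ioo_pow hR (n+1)]
        congr 1; push_cast; ring

/-- the monomial `z^p w^q` is square-integrable on
`X_ℓ = {|z| > √2, |w| < |z|^{-ℓ}}` with weight `(1+|z|²+|w|²)^{-(k+3)}`
iff `p - ℓq ≤ k + ℓ + 1`. -/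
theorem stmt_11 (k : ℤ) (ℓ : ℕ) (p q : ℕ) :
    IntegrableOn
      (fun zw : ℂ × ℂ =>
        ‖zw.1‖ ^ (2 * p) * ‖zw.2‖ ^ (2 * q) *
          (1 + ‖zw.1‖ ^ 2 + ‖zw.2‖ ^ 2) ^ (-(k + 3)))
      {zw : ℂ × ℂ | Real.sqrt 2 < ‖zw.1‖ ∧ ‖zw.2‖ < ‖zw.1‖ ^ (-(ℓ : ℤ))}
      volume ↔
    (p : ℤ) - ℓ * q ≤ k + ℓ + 1 := by
  have h2pos : (0:ℝ) < Real.sqrt 2 := Real.sqrt_pos.2 two_pos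
  have h1lt : (1:ℝ) < Real.sqrt 2 := by
    rw [show (1:ℝ) = Real.sqrt 1 from Real.sqrt_one.symm]
    exact Real.sqrt_lt_sqrt (by norm_num) (by norm_num)
  set m : ℤ := -(k + 3) with hm
  set f : ℂ × ℂ → ℝ := fun zw =>
    ‖zw.1‖ ^ (2 * p) * ‖zw.2‖ ^ (2 * q) * (1 + ‖zw.1‖ ^ 2 + ‖zw.2‖ ^ 2) ^ m with hf
  set g : ℂ × ℂ → ℝ := fun zw =>
    ‖zw.1‖ ^ (2 * p) * ‖zw.2‖ ^ (2 * q) * (‖zw.1‖ ^ 2) ^ m with hgdef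
  set S : Set (ℂ × ℂ) :=
    {zw : ℂ × ℂ | Real.sqrt 2 < ‖zw.1‖ ∧ ‖zw.2‖ < ‖zw.1‖ ^ (-(ℓ : ℤ))} with hSdef
  have hS : MeasurableSet S := by
    apply MeasurableSet.inter
    · exact measurableSet_lt measurable_const (measurable_norm.comp measurable_fst)
    · exact measurableSet_lt (measurable_norm.comp measurable_snd)
        ((measurable_zpow_real _).comp (measurable_norm.comp measurable_fst))
  have hg_meas : Measurable g := by
    apply Measurable.mul
    apply Measurable.mul
    · exact (measurable_norm.comp measurable_fst).pow_const _
    · exact (measurable_norm.comp measurable_snd).pow_const _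
    · exact (measurable_zpow_real m).comp ((measurable_norm.comp measurable_fst).pow_const 2)
  have hg_nonneg : ∀ zw, 0 ≤ g zw := by
    intro zw
    apply mul_nonneg (mul_nonneg (by positivity) (by positivity))
    exact zpow_nonneg (by positivity) m
  have hf_nonneg : ∀ zw, 0 ≤ f zw := by
    intro zw
    apply mul_nonneg (mul_nonneg (by positivity) (by positivity))
    exact zpow_nonneg (by positivity) m
  have hf_cont : Continuous f := by
    apply Continuous.mul
    · exact ((continuous_norm.comp continuous_fst).pow _).mul
        ((continuous_norm.comp continuous_snd).pow _)
    · apply Continuous.zpow₀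
      · exact (continuous_const.add ((continuous_norm.comp continuous_fst).pow 2)).add
          ((continuous_norm.comp continuous_snd).pow 2)
      · intro zw; left; positivity
  set C : ℝ := 2 ^ m.natAbs with hC
  have hbounds : ∀ zw ∈ S, f zw ≤ C * g zw ∧ g zw ≤ C * f zw := by
    rintro ⟨z, w⟩ ⟨hz, hw⟩
    have hz1 : 1 < ‖z‖ := h1lt.trans hz
    have hz0 : (0:ℝ) < ‖z‖ := zero_lt_one.trans hz1
    have hA : (0:ℝ) < ‖z‖ ^ 2 := by positivity
    have hw1 : ‖w‖ < 1 := by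
      refine hw.trans_le ?_
      rw [zpow_neg, zpow_natCast]
      exact inv_le_one_of_one_le₀ (one_le_pow₀ hz1.le)
    have h2A : 2 < ‖z‖ ^ 2 := by
      nlinarith [Real.sq_sqrt (le_of_lt (two_pos (α := ℝ))), Real.sqrt_nonneg 2]
    have hAB : ‖z‖ ^ 2 ≤ 1 + ‖z‖ ^ 2 + ‖w‖ ^ 2 := by nlinarith [norm_nonneg w]
    have hBA : 1 + ‖z‖ ^ 2 + ‖w‖ ^ 2 ≤ 2 * ‖z‖ ^ 2 := by nlinarith [norm_nonneg w]
    obtain ⟨hs1, hs2⟩ := sandwich_zpow hA hAB hBA m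
    have hMnn : (0:ℝ) ≤ ‖z‖ ^ (2*p) * ‖w‖ ^ (2*q) := by positivity
    constructor
    · calc f (z, w) = ‖z‖ ^ (2*p) * ‖w‖ ^ (2*q) * (1 + ‖z‖^2 + ‖w‖^2) ^ m := rfl
        _ ≤ ‖z‖ ^ (2*p) * ‖w‖ ^ (2*q) * (2 ^ m.natAbs * (‖z‖^2) ^ m) :=
            mul_le_mul_of_nonneg_left hs1 hMnn
        _ = C * g (z, w) := by simp only [hgdef, hC]; ring
    · calc g (z, w) = ‖z‖ ^ (2*p) * ‖w‖ ^ (2*q) * (‖z‖^2) ^ m := rfl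
        _ ≤ ‖z‖ ^ (2*p) * ‖w‖ ^ (2*q) * (2 ^ m.natAbs * (1 + ‖z‖^2 + ‖w‖^2) ^ m) :=
            mul_le_mul_of_nonneg_left hs2 hMnn
        _ = C * f (z, w) := by simp only [hf, hC]; ring
  have haesm_g : AEStronglyMeasurable g (volume.restrict S) :=
    hg_meas.aestronglyMeasurable
  have hIff1 : IntegrableOn f S volume ↔ IntegrableOn g S volume := by
    constructor
    · intro h
      refine Integrable.mono' (h.const_mul C) haesm_g ?_
      filter_upwards [ae_restrict_mem hS] with x hx
      rw [Real.norm_eq_abs, _root_.abs_of_nonneg (hg_nonneg x)]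
      exact (hbounds x hx).2
    · intro h
      refine Integrable.mono' (h.const_mul C) hf_cont.aestronglyMeasurable.restrict ?_
      filter_upwards [ae_restrict_mem hS] with x hx
      rw [Real.norm_eq_abs, _root_.abs_of_nonneg (hf_nonneg x)]
      exact (hbounds x hx).1
  set L : ℝ≥0∞ := ∫⁻ zw in S, ENNReal.ofReal (g zw) with hL
  have hIff2 : IntegrableOn g S volume ↔ L < ⊤ := by
    constructor
    · intro h
      exact (hasFiniteIntegral_iff_ofReal (ae_of_all _ hg_nonneg)).1 h.2
    · intro h
      exact ⟨haesm_g, (hasFiniteIntegral_iff_ofReal (ae_of_all _ hg_nonneg)).2 h⟩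
  -- now compute L
  set c : ℝ≥0∞ := (volume : Measure ℂ).toSphere univ with hc
  set ψ : ℝ → ℝ≥0∞ := fun s => (Ioi (Real.sqrt 2)).indicator
    (fun s => ENNReal.ofReal ((s ^ (2*p) * (s^2) ^ m) *
      ((s ^ (-(ℓ:ℤ))) ^ (2*q+2) / (2*(q:ℝ)+2)))) s with hψdef
  have hψ_meas : Measurable ψ := by
    apply Measurable.indicator _ measurableSet_Ioi
    apply ENNReal.measurable_ofReal.comp
    apply Measurable.mul
    · exact (measurable_id.pow_const (2*p)).mul
        ((measurable_zpow_real m).comp (measurable_id.pow_const 2))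
    · exact (((measurable_zpow_real (-(ℓ:ℤ))).pow_const (2*q+2)).div_const _)
  have hFmeas : Measurable (S.indicator fun zw : ℂ × ℂ => ENNReal.ofReal (g zw)) :=
    (ENNReal.measurable_ofReal.comp hg_meas).indicator hS
  have hinner : ∀ z : ℂ,
      (∫⁻ w : ℂ, S.indicator (fun zw => ENNReal.ofReal (g zw)) (z, w)) = c * ψ ‖z‖ := by
    intro z
    by_cases hz : Real.sqrt 2 < ‖z‖
    · have hz1 : 1 < ‖z‖ := h1lt.trans hz
      have hz0 : (0:ℝ) < ‖z‖ := zero_lt_one.trans hz1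
      set R : ℝ := ‖z‖ ^ (-(ℓ:ℤ)) with hR
      have hRpos : 0 < R := zpow_pos hz0 _
      have hGnn : (0:ℝ) ≤ ‖z‖ ^ (2*p) * (‖z‖^2) ^ m :=
        mul_nonneg (by positivity) (zpow_nonneg (by positivity) m)
      have hind : ∀ w : ℂ, S.indicator (fun zw => ENNReal.ofReal (g zw)) (z, w)
          = (ball (0:ℂ) R).indicator
            (fun w => ENNReal.ofReal (‖z‖ ^ (2*p) * (‖z‖^2) ^ m) *
              ENNReal.ofReal (‖w‖ ^ (2*q))) w := by
        intro w
        by_cases hw : ‖w‖ < R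
        · rw [indicator_of_mem (by exact ⟨hz, hw⟩),
            indicator_of_mem (by simpa [mem_ball_zero_iff] using hw)]
          rw [← ENNReal.ofReal_mul hGnn]
          congr 1
          simp only [hgdef]
          ring
        · rw [indicator_of_notMem (by simp only [hSdef, mem_setOf_eq]; tauto),
            indicator_of_notMem (by simpa [mem_ball_zero_iff] using hw)]
      simp only [hind]
      rw [lintegral_indicator measurableSet_ball,
        lintegral_const_mul _ (by fun_prop),
        lintegral_ball_norm_pow hRpos.le (2*q)]
      rw [hψdef]
      simp only [indicator_of_mem (mem_Ioi.2 hz)]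
      rw [ENNReal.ofReal_mul hGnn]
      have : ENNReal.ofReal (R ^ (2*q+2) / (2*(q:ℝ)+2))
          = ENNReal.ofReal (R ^ (2*q+2) / ((2*q : ℕ) + 2 : ℝ)) := by
        congr 1
        push_cast
        ring
      rw [this]
      ring
    · have h0 : ∀ w : ℂ, S.indicator (fun zw => ENNReal.ofReal (g zw)) (z, w) = 0 := by
        intro w
        apply indicator_of_notMem
        simp only [hSdef, mem_setOf_eq]
        tauto
      simp only [h0, lintegral_zero, hψdef,
        indicator_of_notMem (by simpa using hz : ‖z‖ ∉ Ioi (Real.sqrt 2))]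
      rw [mul_zero]
  have hLcalc : L = c * (c * ∫⁻ r in Ioi (0:ℝ), ENNReal.ofReal r * ψ r) := by
    rw [hL, ← lintegral_indicator hS]
    rw [show (volume : Measure (ℂ × ℂ)) = (volume : Measure ℂ).prod volume from Measure.volume_eq_prod ℂ ℂ]
    rw [MeasureTheory.lintegral_prod _ hFmeas.aemeasurable]
    simp only [hinner]
    rw [lintegral_const_mul _ (show Measurable fun z : ℂ => ψ ‖z‖ from hψ_meas.comp measurable_norm),
      lintegral_norm_complex _ hψ_meas]
  -- radial computation
  set t : ℤ := 2*p + 2*m + (-(ℓ:ℤ))*(2*q+2) + 1 with ht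
  set J : ℝ≥0∞ := ∫⁻ r in Ioi (Real.sqrt 2), ENNReal.ofReal (r ^ ((t : ℝ))) with hJ
  have hradial : (∫⁻ r in Ioi (0:ℝ), ENNReal.ofReal r * ψ r)
      = J * ENNReal.ofReal ((2*(q:ℝ)+2)⁻¹) := by
    have h2 : ∀ r : ℝ, ENNReal.ofReal r * ψ r
        = (Ioi (Real.sqrt 2)).indicator (fun r => ENNReal.ofReal r *
            ENNReal.ofReal ((r ^ (2*p) * (r^2) ^ m) *
              ((r ^ (-(ℓ:ℤ))) ^ (2*q+2) / (2*(q:ℝ)+2)))) r := by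
      intro r
      simp only [hψdef]
      by_cases h : r ∈ Ioi (Real.sqrt 2)
      · rw [indicator_of_mem h, indicator_of_mem h]
      · rw [indicator_of_notMem h, indicator_of_notMem h, mul_zero]
    simp only [h2]
    rw [lintegral_indicator measurableSet_Ioi, Measure.restrict_restrict measurableSet_Ioi,
      Ioi_inter_Ioi, max_eq_left h2pos.le]
    rw [hJ, ← lintegral_mul_const _ (by fun_prop)]
    apply setLIntegral_congr_fun measurableSet_Ioi
    intro r hr
    have hr1 : 1 < r := h1lt.trans hr
    have hr0 : (0:ℝ) < r := zero_lt_one.trans hr1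
    have hrne : r ≠ 0 := hr0.ne'
    dsimp only
    rw [← ENNReal.ofReal_mul hr0.le]
    have hzp : r * (r ^ (2*p) * (r^2) ^ m * ((r ^ (-(ℓ:ℤ))) ^ (2*q+2) / (2*(q:ℝ)+2)))
        = r ^ t * (2*(q:ℝ)+2)⁻¹ := by
      have e1 : r ^ (2*p) = r ^ (((2*p : ℕ)) : ℤ) := (zpow_natCast r (2*p)).symm
      have e2 : (r^2) ^ m = r ^ ((((2:ℕ)) : ℤ) * m) := by
        rw [zpow_mul, zpow_natCast]
      have e3 : (r ^ (-(ℓ:ℤ))) ^ (2*q+2) = r ^ ((-(ℓ:ℤ)) * (((2*q+2 : ℕ)) : ℤ)) := by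
        rw [zpow_mul, zpow_natCast]
      rw [div_eq_mul_inv, e1, e2, e3,
        show r * (r ^ (((2*p : ℕ)) : ℤ) * r ^ ((((2:ℕ)) : ℤ) * m) *
            (r ^ ((-(ℓ:ℤ)) * (((2*q+2 : ℕ)) : ℤ)) * (2*(q:ℝ)+2)⁻¹))
          = r * (r ^ (((2*p : ℕ)) : ℤ) * (r ^ ((((2:ℕ)) : ℤ) * m) *
            r ^ ((-(ℓ:ℤ)) * (((2*q+2 : ℕ)) : ℤ)))) * (2*(q:ℝ)+2)⁻¹ from by ring,
        ← zpow_add₀ hrne, ← zpow_add₀ hrne, ← zpow_one_add₀ hrne]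
      congr 2
      rw [ht]
      push_cast
      ring
    rw [hzp, ENNReal.ofReal_mul (zpow_nonneg hr0.le t)]
    congr 2
    exact (Real.rpow_intCast r t).symm
  have hc0 : c ≠ 0 := by
    rw [hc, Measure.toSphere_apply_univ]
    simp only [ne_eq, mul_eq_zero, not_or]
    constructor
    · simp [Complex.finrank_real_complex]
    · exact (measure_ball_pos volume (0:ℂ) one_pos).ne'
  have hctop : c ≠ ⊤ := measure_ne_top _ _
  have hq0 : ENNReal.ofReal ((2*(q:ℝ)+2)⁻¹) ≠ 0 := by
    rw [ne_eq, ENNReal.ofReal_eq_zero, not_le]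
    positivity
  have hqtop : ENNReal.ofReal ((2*(q:ℝ)+2)⁻¹) ≠ ⊤ := ENNReal.ofReal_ne_top
  have hLJ : L < ⊤ ↔ J < ⊤ := by
    rw [hLcalc, hradial]
    constructor
    · intro h
      by_contra hJtop
      rw [not_lt, top_le_iff] at hJtop
      rw [hJtop] at h
      rw [ENNReal.top_mul hq0, ENNReal.mul_top hc0, ENNReal.mul_top hc0] at h
      exact absurd h (by simp)
    · intro h
      exact ENNReal.mul_lt_top hctop.lt_top
        (ENNReal.mul_lt_top hctop.lt_top (ENNReal.mul_lt_top h hqtop.lt_top))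
  have hJiff : J < ⊤ ↔ (t : ℝ) < -1 := lintegral_Ioi_rpow_top_iff _
  rw [show IntegrableOn
      (fun zw : ℂ × ℂ =>
        ‖zw.1‖ ^ (2 * p) * ‖zw.2‖ ^ (2 * q) *
          (1 + ‖zw.1‖ ^ 2 + ‖zw.2‖ ^ 2) ^ (-(k + 3)))
      {zw : ℂ × ℂ | Real.sqrt 2 < ‖zw.1‖ ∧ ‖zw.2‖ < ‖zw.1‖ ^ (-(ℓ : ℤ))} volume
    = IntegrableOn f S volume from rfl]
  rw [hIff1, hIff2, hLJ, hJiff]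
  have hcast : ((t : ℝ) < -1) ↔ (t < -1) := by
    constructor
    · intro h; exact_mod_cast h
    · intro h; exact_mod_cast h
  rw [hcast, ht, hm]
  have hu : (-(ℓ:ℤ)) * (2*(q:ℤ)+2) = -2*((ℓ:ℤ)*(q:ℤ)) - 2*(ℓ:ℤ) := by ring
  constructor
  · intro h
    have h' : 2*(p:ℤ) + 2*(-(k+3)) + (-2*((ℓ:ℤ)*(q:ℤ)) - 2*(ℓ:ℤ)) + 1 < -1 := by
      rw [← hu]; push_cast at h ⊢; linarith
    generalize (ℓ:ℤ)*(q:ℤ) = u at h' ⊢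
    omega
  · intro h
    have h' : 2*(p:ℤ) + 2*(-(k+3)) + (-2*((ℓ:ℤ)*(q:ℤ)) - 2*(ℓ:ℤ)) + 1 < -1 := by
      generalize (ℓ:ℤ)*(q:ℤ) = u at h ⊢
      omega
    rw [← hu] at h'
    push_cast at h' ⊢
    linarith
end

section
/- Fix integers k and m ≥ 2, define Z_m = {(z,w) ∈ ℂ² : |z|²+|w|² > 2, ||z|−|w|| < (|z|+|w|)^{-m}} and the weight φ_k(z,w) = (1+|z|²+|w|²)^{-(k+3)}. Then for nonnegative integers p, q, the monomial z^p w^q satisfies ∫_{Z_m} |z|^{2p} |w|^{2q} φ_k(z,w) dλ(z,w) < ∞ if and only if 2(p+q) ≤ m + 2k + 2. -/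
open MeasureTheory Complex Set Real


theorem lintegral_comp_polarCoord_symm' (f : ℝ × ℝ → ENNReal) :
    ∫⁻ p in polarCoord.target, ENNReal.ofReal p.1 * f (polarCoord.symm p) = ∫⁻ p, f p := by
  set B : ℝ × ℝ → ℝ × ℝ →L[ℝ] ℝ × ℝ := fun p =>
    LinearMap.toContinuousLinearMap (Matrix.toLin (Module.Basis.finTwoProd ℝ) (Module.Basis.finTwoProd ℝ)
      !![Real.cos p.2, -p.1 * Real.sin p.2; Real.sin p.2, p.1 * Real.cos p.2])
  have A : ∀ p ∈ polarCoord.target, HasFDerivWithinAt polarCoord.symm (B p) polarCoord.target p :=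
    fun p _ => (hasFDerivAt_polarCoord_symm p).hasFDerivWithinAt
  have B_det : ∀ p, (B p).det = p.1 := by
    intro p
    conv_rhs => rw [← one_mul p.1, ← Real.cos_sq_add_sin_sq p.2]
    simp only [B, neg_mul, LinearMap.det_toContinuousLinearMap, LinearMap.det_toLin,
      Matrix.det_fin_two_of, sub_neg_eq_add]
    ring
  symm
  calc
    ∫⁻ p, f p = ∫⁻ p in polarCoord.source, f p := by
      rw [← setLIntegral_univ]
      exact setLIntegral_congr polarCoord_source_ae_eq_univ.symm
    _ = ∫⁻ p in polarCoord.symm '' polarCoord.target, f p := by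
      rw [polarCoord.symm_image_target_eq_source]
    _ = ∫⁻ p in polarCoord.target, ENNReal.ofReal |(B p).det| * f (polarCoord.symm p) := by
      exact lintegral_image_eq_lintegral_abs_det_fderiv_mul volume
        polarCoord.open_target.measurableSet A polarCoord.symm.injOn f
    _ = ∫⁻ p in polarCoord.target, ENNReal.ofReal p.1 * f (polarCoord.symm p) := by
      refine setLIntegral_congr_fun polarCoord.open_target.measurableSet
        (fun p hp => ?_)
      rw [B_det, abs_of_pos hp.1]

theorem lintegral_comp_polarCoordC (f : ℂ → ENNReal) :
    ∫⁻ p in polarCoord.target, ENNReal.ofReal p.1 * f (Complex.polarCoord.symm p) = ∫⁻ z, f z := by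
  rw [← (Complex.volume_preserving_equiv_real_prod.symm).map_eq,
    MeasureTheory.lintegral_map_equiv f Complex.measurableEquivRealProd.symm,
    ← lintegral_comp_polarCoord_symm']
  rfl

theorem lintegral_radial (g : ℝ → ENNReal) (hg : Measurable g) :
    ∫⁻ z : ℂ, g ‖z‖ = ENNReal.ofReal (2 * π) * ∫⁻ r in Ioi (0:ℝ), ENNReal.ofReal r * g r := by
  rw [← lintegral_comp_polarCoordC (fun z => g ‖z‖)]
  have h1 : ∫⁻ p in polarCoord.target, ENNReal.ofReal p.1 * g ‖Complex.polarCoord.symm p‖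
      = ∫⁻ p in polarCoord.target, ENNReal.ofReal p.1 * g p.1 := by
    refine setLIntegral_congr_fun polarCoord.open_target.measurableSet
      (fun p hp => ?_)
    rw [norm_polarCoord_symm, abs_of_pos hp.1]
  rw [h1, polarCoord_target, Measure.volume_eq_prod, ← Measure.prod_restrict,
    lintegral_prod (fun p : ℝ × ℝ => ENNReal.ofReal p.1 * g p.1) (((measurable_fst.ennreal_ofReal).mul (hg.comp measurable_fst)).aemeasurable)]
  simp only [lintegral_const, Measure.restrict_apply MeasurableSet.univ, univ_inter,
    Real.volume_Ioo]
  rw [lintegral_mul_const' (ENNReal.ofReal (π - -π)) _ (by simp),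
    show π - -π = 2 * π by ring, mul_comm]

theorem lintegral_biradial (g : ℝ → ℝ → ENNReal) (hg : Measurable (Function.uncurry g)) :
    ∫⁻ zw : ℂ × ℂ, g ‖zw.1‖ ‖zw.2‖ =
      ENNReal.ofReal (2 * π) * (ENNReal.ofReal (2 * π) *
        ∫⁻ r in Ioi (0:ℝ), ENNReal.ofReal r * ∫⁻ s in Ioi (0:ℝ), ENNReal.ofReal s * g r s) := by
  have hGmeas : Measurable fun r : ℝ => ∫⁻ s in Ioi (0:ℝ), ENNReal.ofReal s * g r s := by
    apply Measurable.lintegral_prod_right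
    exact (measurable_snd.ennreal_ofReal).mul hg
  rw [Measure.volume_eq_prod, lintegral_prod (fun zw : ℂ × ℂ => g ‖zw.1‖ ‖zw.2‖)
    ((hg.comp ((measurable_fst.norm).prodMk (measurable_snd.norm))).aemeasurable)]
  have inner : ∀ z : ℂ, ∫⁻ w : ℂ, g ‖z‖ ‖w‖ =
      ENNReal.ofReal (2 * π) * ∫⁻ s in Ioi (0:ℝ), ENNReal.ofReal s * g ‖z‖ s := fun z =>
    lintegral_radial (g ‖z‖) (hg.comp (measurable_const.prodMk measurable_id))
  simp_rw [inner]
  rw [lintegral_const_mul' _ _ ENNReal.ofReal_ne_top,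
    lintegral_radial _ hGmeas]


lemma zpow_le_c (e : ℤ) {a x c : ℝ} (ha : 0 < a) (hc : 1 ≤ c) (hax : a ≤ x) (hxc : x ≤ c * a) :
    x ^ e ≤ c ^ e.natAbs * a ^ e := by
  have hx : 0 < x := lt_of_lt_of_le ha hax
  have hc0 : 0 < c := lt_of_lt_of_le one_pos hc
  induction e using Int.rec with
  | ofNat n =>
    simp only [Int.ofNat_eq_coe, zpow_natCast, Int.natAbs_natCast]
    calc x ^ n ≤ (c * a) ^ n := pow_le_pow_left₀ hx.le hxc n
      _ = c ^ n * a ^ n := mul_pow c a n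
  | negSucc n =>
    simp only [zpow_negSucc, Int.natAbs_negSucc]
    have h1 : (x ^ (n + 1))⁻¹ ≤ (a ^ (n + 1))⁻¹ := by
      apply inv_anti₀ (pow_pos ha _) (pow_le_pow_left₀ ha.le hax _)
    refine h1.trans ?_
    apply le_mul_of_one_le_left (inv_nonneg.mpr (pow_nonneg ha.le _))
    calc (1:ℝ) = 1 ^ (n+1) := (one_pow _).symm
      _ ≤ c ^ (n+1) := pow_le_pow_left₀ zero_le_one hc _

lemma le_zpow_c (e : ℤ) {a x c : ℝ} (ha : 0 < a) (hc : 1 ≤ c) (hax : a ≤ x) (hxc : x ≤ c * a) :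
    a ^ e ≤ c ^ e.natAbs * x ^ e := by
  have hx : 0 < x := lt_of_lt_of_le ha hax
  have hc0 : 0 < c := lt_of_lt_of_le one_pos hc
  induction e using Int.rec with
  | ofNat n =>
    simp only [Int.ofNat_eq_coe, zpow_natCast, Int.natAbs_natCast]
    calc a ^ n ≤ x ^ n := pow_le_pow_left₀ ha.le hax n
      _ ≤ c ^ n * x ^ n := by
        apply le_mul_of_one_le_left (pow_nonneg hx.le _)
        calc (1:ℝ) = 1 ^ n := (one_pow _).symm
          _ ≤ c ^ n := pow_le_pow_left₀ zero_le_one hc _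
  | negSucc n =>
    simp only [zpow_negSucc, Int.natAbs_negSucc]
    have h1 : x ^ (n + 1) ≤ c ^ (n+1) * a ^ (n + 1) := by
      calc x ^ (n+1) ≤ (c * a) ^ (n+1) := pow_le_pow_left₀ hx.le hxc _
        _ = c ^ (n+1) * a ^ (n+1) := mul_pow c a _
    have h2 : (a ^ (n + 1))⁻¹ = c ^ (n+1) * (c ^ (n+1) * a ^ (n + 1))⁻¹ := by
      rw [mul_inv, ← mul_assoc, mul_inv_cancel₀ (pow_pos hc0 _).ne', one_mul]
    rw [h2]
    exact mul_le_mul_of_nonneg_left (inv_anti₀ (pow_pos hx _) h1)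
      (pow_nonneg hc0.le _)

lemma zpow_neg_coe_le {u v : ℝ} (hu : 0 < u) (huv : u ≤ v) (m : ℕ) :
    v ^ (-(m:ℤ)) ≤ u ^ (-(m:ℤ)) := by
  rw [zpow_neg, zpow_neg, zpow_natCast, zpow_natCast]
  exact inv_anti₀ (pow_pos hu m) (pow_le_pow_left₀ hu.le huv m)

lemma P_facts {m : ℕ} (hm : 2 ≤ m) {r s : ℝ} (hr : 0 < r) (hs : 0 < s)
    (h1 : 2 < r^2 + s^2) (h2 : |r - s| < (r + s) ^ (-(m:ℤ))) :
    1/5 < r ∧ s < 6*r ∧ |r - s| < r ^ (-(m:ℤ)) := by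
  have hrs : 0 < r + s := by linarith
  have h4 : 1 < r + s := by nlinarith
  have h5 : (r+s) ^ (-(m:ℤ)) < 1 := by
    rw [zpow_neg, zpow_natCast]
    rw [inv_lt_one_iff₀]
    right
    exact one_lt_pow₀ h4 (by omega)
  have h6 : |r - s| < 1 := h2.trans h5
  obtain ⟨h6a, h6b⟩ := abs_lt.mp h6
  have hr5 : 1/5 < r := by nlinarith
  refine ⟨hr5, by linarith, h2.trans_le (zpow_neg_coe_le hr (by linarith) m)⟩

open Classical in
noncomputable def Wf (k : ℤ) (m p q : ℕ) (r s : ℝ) : ENNReal :=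
  if 2 < r ^ 2 + s ^ 2 ∧ |r - s| < (r + s) ^ (-(m:ℤ)) then
    ENNReal.ofReal (r ^ (2*p) * s ^ (2*q) * (1 + r^2 + s^2) ^ (-(k+3)))
  else 0

lemma measurable_Wf (k : ℤ) (m p q : ℕ) : Measurable (Function.uncurry (Wf k m p q)) := by
  unfold Function.uncurry Wf
  apply Measurable.ite
  · rw [Set.setOf_and]
    refine MeasurableSet.inter ?_ ?_
    · exact measurableSet_lt measurable_const (by fun_prop)
    · refine measurableSet_lt (by fun_prop) ?_
      exact (measurable_fst.add measurable_snd).pow_const (-(m:ℤ))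
  · apply Measurable.ennreal_ofReal
    refine Measurable.mul (by fun_prop) ?_
    exact ((measurable_const.add (measurable_fst.pow_const 2)).add
      (measurable_snd.pow_const 2)).pow_const (-(k+3))
  · exact measurable_const

lemma rpow_expand {r : ℝ} (hr0 : 0 < r) (k : ℤ) (m p q : ℕ) :
    r ^ (((2*(p:ℤ)+2*q+2-2*(k+3)-m : ℤ)):ℝ) =
      r^(2*p) * r^(2*q) * (r^2)^(-(k+3)) * r^(-(m:ℤ)) * r^2 := by
  have h1 : (r^2)^(-(k+3)) = r ^ ((2:ℤ)*(-(k+3))) := by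
    rw [← zpow_natCast r 2, ← zpow_mul]
    norm_num
  rw [h1, ← Real.rpow_natCast r (2*p), ← Real.rpow_natCast r (2*q),
    ← Real.rpow_intCast r ((2:ℤ)*(-(k+3))), ← Real.rpow_intCast r (-(m:ℤ)),
    ← Real.rpow_natCast r 2,
    ← Real.rpow_add hr0, ← Real.rpow_add hr0, ← Real.rpow_add hr0, ← Real.rpow_add hr0]
  congr 1
  push_cast
  ring

lemma phi_le (k : ℤ) (m p q : ℕ) {r : ℝ} (hr5 : 1/5 < r) :
    r * ((6*r * (r^(2*p) * (6*r)^(2*q) *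
        ((37:ℝ) ^ (-(k+3)).natAbs * (1+r^2)^(-(k+3))))) * (2 * r ^ (-(m:ℤ))))
      ≤ (12 * 6^(2*q) * ((37:ℝ) ^ (-(k+3)).natAbs)^2) *
          r ^ (((2*(p:ℤ)+2*q+2-2*(k+3)-m : ℤ)):ℝ) := by
  have hr0 : 0 < r := by linarith
  have key : (1+r^2)^(-(k+3)) ≤ (37:ℝ)^(-(k+3)).natAbs * (r^2)^(-(k+3)) :=
    zpow_le_c _ (by positivity) (by norm_num) (by nlinarith) (by nlinarith)
  calc r * ((6*r * (r^(2*p) * (6*r)^(2*q) *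
        ((37:ℝ) ^ (-(k+3)).natAbs * (1+r^2)^(-(k+3))))) * (2 * r ^ (-(m:ℤ))))
      ≤ r * ((6*r * (r^(2*p) * (6*r)^(2*q) *
        ((37:ℝ) ^ (-(k+3)).natAbs * ((37:ℝ)^(-(k+3)).natAbs * (r^2)^(-(k+3)))))) *
          (2 * r ^ (-(m:ℤ)))) := by
        gcongr
    _ = (12 * 6^(2*q) * ((37:ℝ) ^ (-(k+3)).natAbs)^2) *
          r ^ (((2*(p:ℤ)+2*q+2-2*(k+3)-m : ℤ)):ℝ) := by
        rw [rpow_expand hr0, mul_pow]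
        ring

lemma phi_ge_eq (k : ℤ) (m p q : ℕ) {r : ℝ} (hr0 : 0 < r) :
    ((((6:ℝ)^(-(k+3)).natAbs)⁻¹ * (3:ℝ)^(-(m:ℤ))) *
        r ^ (((2*(p:ℤ)+2*q+2-2*(k+3)-m : ℤ)):ℝ))
      = r * ((r * (r^(2*p) * r^(2*q) * (((6:ℝ)^(-(k+3)).natAbs)⁻¹ * (r^2)^(-(k+3))))) *
          ((3*r)^(-(m:ℤ)))) := by
  rw [mul_zpow, rpow_expand hr0]
  ring

lemma inner_le (k : ℤ) (m p q : ℕ) (hm : 2 ≤ m) {r : ℝ} (hr : 0 < r) :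
    (∫⁻ s in Ioi (0:ℝ), ENNReal.ofReal s * Wf k m p q r s) ≤
      (Ioi (1/5:ℝ)).indicator (fun r => ENNReal.ofReal
        ((6*r * (r^(2*p) * (6*r)^(2*q) * ((37:ℝ) ^ (-(k+3)).natAbs * (1+r^2)^(-(k+3))))) *
          (2 * r ^ (-(m:ℤ))))) r := by
  by_cases hr5 : (1/5:ℝ) < r
  · rw [Set.indicator_of_mem (show r ∈ Ioi (1/5:ℝ) from hr5)]
    set D : ℝ := 6*r * (r^(2*p) * (6*r)^(2*q) *
      ((37:ℝ)^(-(k+3)).natAbs * (1+r^2)^(-(k+3)))) with hD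
    have hD0 : 0 ≤ D := by positivity
    have step : ∀ s ∈ Ioi (0:ℝ), ENNReal.ofReal s * Wf k m p q r s ≤
        (Ioo (r - r^(-(m:ℤ))) (r + r^(-(m:ℤ)))).indicator (fun _ => ENNReal.ofReal D) s := by
      intro s hs
      unfold Wf
      split_ifs with hP
      · obtain ⟨_, h6, h7⟩ := P_facts hm hr hs hP.1 hP.2
        have hmem : s ∈ Ioo (r - r^(-(m:ℤ))) (r + r^(-(m:ℤ))) := by
          obtain ⟨ha, hb⟩ := abs_lt.mp h7
          constructor <;> simp only [mem_Ioi] at * <;> linarith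
        rw [indicator_of_mem hmem, ← ENNReal.ofReal_mul (le_of_lt hs)]
        apply ENNReal.ofReal_le_ofReal
        have hs0 : (0:ℝ) < s := hs
        have key : (1+r^2+s^2) ^ (-(k+3)) ≤
            (37:ℝ)^(-(k+3)).natAbs * (1+r^2)^(-(k+3)) :=
          zpow_le_c _ (by positivity) (by norm_num) (by nlinarith) (by nlinarith)
        calc s * (r^(2*p) * s^(2*q) * (1+r^2+s^2)^(-(k+3)))
            ≤ (6*r) * (r^(2*p) * (6*r)^(2*q) *
                ((37:ℝ)^(-(k+3)).natAbs * (1+r^2)^(-(k+3)))) := by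
              gcongr <;> first
                | exact h6.le
                | exact pow_le_pow_left₀ hs0.le h6.le _
                | positivity
          _ = D := hD.symm
      · rw [mul_zero]
        exact zero_le
    calc (∫⁻ s in Ioi (0:ℝ), ENNReal.ofReal s * Wf k m p q r s)
        ≤ ∫⁻ s in Ioi (0:ℝ),
            (Ioo (r - r^(-(m:ℤ))) (r + r^(-(m:ℤ)))).indicator (fun _ => ENNReal.ofReal D) s :=
          setLIntegral_mono (measurable_const.indicator measurableSet_Ioo) step
      _ = ENNReal.ofReal D * volume (Ioo (r - r^(-(m:ℤ))) (r + r^(-(m:ℤ))) ∩ Ioi 0) := by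
          rw [lintegral_indicator measurableSet_Ioo, setLIntegral_const,
            Measure.restrict_apply measurableSet_Ioo]
      _ ≤ ENNReal.ofReal D * ENNReal.ofReal (2 * r ^ (-(m:ℤ))) := by
          apply mul_le_mul_right
          refine le_trans (measure_mono inter_subset_left) ?_
          rw [Real.volume_Ioo, show r + r^(-(m:ℤ)) - (r - r^(-(m:ℤ))) = 2 * r^(-(m:ℤ)) by ring]
      _ = ENNReal.ofReal (D * (2 * r ^ (-(m:ℤ)))) := (ENNReal.ofReal_mul hD0).symm
  · rw [Set.indicator_of_notMem (show r ∉ Ioi (1/5:ℝ) from hr5)]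
    have hz : ∀ s ∈ Ioi (0:ℝ), ENNReal.ofReal s * Wf k m p q r s = 0 := by
      intro s hs
      unfold Wf
      split_ifs with hP
      · exact absurd (P_facts hm hr hs hP.1 hP.2).1 hr5
      · rw [mul_zero]
    rw [setLIntegral_congr_fun measurableSet_Ioi hz, lintegral_zero]

lemma inner_ge (k : ℤ) (m p q : ℕ) (hm : 2 ≤ m) {r : ℝ} (hr2 : 2 < r) :
    ENNReal.ofReal ((r * (r^(2*p) * r^(2*q) * (((6:ℝ)^(-(k+3)).natAbs)⁻¹ * (r^2)^(-(k+3))))) *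
        ((3*r)^(-(m:ℤ))))
      ≤ ∫⁻ s in Ioi (0:ℝ), ENNReal.ofReal s * Wf k m p q r s := by
  have hr0 : (0:ℝ) < r := by linarith
  set δ : ℝ := (3*r)^(-(m:ℤ)) with hδ
  have hδ0 : 0 < δ := zpow_pos (by linarith) _
  have hδ1 : δ ≤ 1 := by
    rw [hδ, zpow_neg, zpow_natCast]
    rw [inv_le_one_iff₀]
    right
    exact one_le_pow₀ (by linarith)
  set L : ℝ := r * (r^(2*p) * r^(2*q) * (((6:ℝ)^(-(k+3)).natAbs)⁻¹ * (r^2)^(-(k+3)))) with hL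
  have hL0 : 0 ≤ L := by positivity
  have step : ∀ s ∈ Ioi (0:ℝ),
      (Ioo r (r+δ)).indicator (fun _ => ENNReal.ofReal L) s ≤
        ENNReal.ofReal s * Wf k m p q r s := by
    intro s hs
    by_cases hmem : s ∈ Ioo r (r+δ)
    · rw [indicator_of_mem hmem]
      obtain ⟨hsr, hsd⟩ := hmem
      have hs2 : s < 2*r := by linarith
      have hP : 2 < r^2 + s^2 ∧ |r - s| < (r + s) ^ (-(m:ℤ)) := by
        constructor
        · nlinarith
        · rw [abs_sub_comm, abs_of_pos (by linarith)]
          have h3 : (3*r)^(-(m:ℤ)) ≤ (r+s)^(-(m:ℤ)) :=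
            zpow_neg_coe_le (by linarith) (by linarith) m
          linarith
      unfold Wf
      rw [if_pos hP, ← ENNReal.ofReal_mul (by linarith)]
      apply ENNReal.ofReal_le_ofReal
      have key : (((6:ℝ)^(-(k+3)).natAbs)⁻¹ * (r^2)^(-(k+3))) ≤ (1+r^2+s^2)^(-(k+3)) := by
        rw [inv_mul_le_iff₀ (by positivity)]
        exact le_zpow_c _ (by positivity) (by norm_num) (by nlinarith) (by nlinarith)
      rw [hL]
      gcongr <;> first
        | exact hsr.le
        | exact pow_le_pow_left₀ hr0.le hsr.le _
        | linarith
        | positivity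
        | exact mul_nonneg (pow_nonneg hr0.le _) (pow_nonneg (by linarith : (0:ℝ) ≤ s) _)
    · rw [indicator_of_notMem hmem]
      exact zero_le
  calc ENNReal.ofReal (L * δ)
      = ENNReal.ofReal L * volume (Ioo r (r+δ)) := by
        rw [Real.volume_Ioo, show r + δ - r = δ by ring, ENNReal.ofReal_mul hL0]
    _ = ∫⁻ s in Ioi (0:ℝ), (Ioo r (r+δ)).indicator (fun _ => ENNReal.ofReal L) s := by
        rw [lintegral_indicator measurableSet_Ioo, setLIntegral_const,
          Measure.restrict_apply measurableSet_Ioo,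
          Set.inter_eq_self_of_subset_left
            (show Ioo r (r+δ) ⊆ Ioi 0 from fun x hx => lt_trans hr0 hx.1)]
    _ ≤ ∫⁻ s in Ioi (0:ℝ), ENNReal.ofReal s * Wf k m p q r s := by
        apply setLIntegral_mono ?_ step
        exact (measurable_id.ennreal_ofReal).mul
          ((measurable_Wf k m p q).comp (measurable_prodMk_left))


lemma I_lt_top (k : ℤ) (m p q : ℕ) (hm : 2 ≤ m)
    (hB : (2*(p:ℤ)+2*q+2-2*(k+3)-m : ℤ) ≤ -2) :
    ∫⁻ r in Ioi (0:ℝ), ENNReal.ofReal r *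
      ∫⁻ s in Ioi (0:ℝ), ENNReal.ofReal s * Wf k m p q r s < ⊤ := by
  set B : ℝ := ((2*(p:ℤ)+2*q+2-2*(k+3)-m : ℤ) : ℝ) with hBdef
  set C : ℝ := 12 * 6^(2*q) * ((37:ℝ)^(-(k+3)).natAbs)^2 with hC
  have hBlt : B < -1 := by
    rw [hBdef]
    have h2 : ((2*(p:ℤ)+2*q+2-2*(k+3)-m : ℤ):ℝ) ≤ ((-2 : ℤ):ℝ) := by exact_mod_cast hB
    push_cast at h2 ⊢
    linarith
  have hmono : ∀ r ∈ Ioi (0:ℝ), ENNReal.ofReal r *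
      (∫⁻ s in Ioi (0:ℝ), ENNReal.ofReal s * Wf k m p q r s) ≤
      (Ioi (1/5:ℝ)).indicator (fun r => ENNReal.ofReal (C * r ^ B)) r := by
    intro r hr
    have hr0 : (0:ℝ) < r := hr
    refine le_trans (mul_le_mul_right (inner_le k m p q hm hr0) _) ?_
    by_cases hr5 : (1/5:ℝ) < r
    · rw [Set.indicator_of_mem (show r ∈ Ioi (1/5:ℝ) from hr5),
        Set.indicator_of_mem (show r ∈ Ioi (1/5:ℝ) from hr5),
        ← ENNReal.ofReal_mul hr0.le]
      exact ENNReal.ofReal_le_ofReal (phi_le k m p q hr5)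
    · rw [Set.indicator_of_notMem (show r ∉ Ioi (1/5:ℝ) from hr5),
        Set.indicator_of_notMem (show r ∉ Ioi (1/5:ℝ) from hr5), mul_zero]
  have intgr : IntegrableOn (fun r : ℝ => C * r ^ B) (Ioi (1/5:ℝ)) volume :=
    ((integrableOn_Ioi_rpow_iff (by norm_num)).mpr hBlt).const_mul C
  have hnn : 0 ≤ᵐ[volume.restrict (Ioi (1/5:ℝ))] fun r : ℝ => C * r ^ B := by
    filter_upwards [ae_restrict_mem measurableSet_Ioi] with r hr
    have hr0 : (0:ℝ) < r := lt_trans (by norm_num) hr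
    positivity
  have fin : ∫⁻ r in Ioi (1/5:ℝ), ENNReal.ofReal (C * r ^ B) < ⊤ :=
    (hasFiniteIntegral_iff_ofReal hnn).mp intgr.2
  calc ∫⁻ r in Ioi (0:ℝ), ENNReal.ofReal r *
        ∫⁻ s in Ioi (0:ℝ), ENNReal.ofReal s * Wf k m p q r s
      ≤ ∫⁻ r in Ioi (0:ℝ), (Ioi (1/5:ℝ)).indicator
          (fun r => ENNReal.ofReal (C * r ^ B)) r :=
        setLIntegral_mono (Measurable.indicator (by fun_prop) measurableSet_Ioi) hmono
    _ = ∫⁻ r in Ioi (1/5:ℝ), ENNReal.ofReal (C * r ^ B) := by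
        rw [lintegral_indicator measurableSet_Ioi,
          Measure.restrict_restrict measurableSet_Ioi,
          Set.inter_eq_self_of_subset_left (Ioi_subset_Ioi (by norm_num))]
    _ < ⊤ := fin

lemma I_eq_top (k : ℤ) (m p q : ℕ) (hm : 2 ≤ m)
    (hB : (-1 : ℤ) ≤ 2*(p:ℤ)+2*q+2-2*(k+3)-m) :
    ¬ (∫⁻ r in Ioi (0:ℝ), ENNReal.ofReal r *
        ∫⁻ s in Ioi (0:ℝ), ENNReal.ofReal s * Wf k m p q r s < ⊤) := by
  intro hfin
  set B : ℝ := ((2*(p:ℤ)+2*q+2-2*(k+3)-m : ℤ) : ℝ) with hBdef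
  set CL : ℝ := ((6:ℝ)^(-(k+3)).natAbs)⁻¹ * (3:ℝ)^(-(m:ℤ)) with hCL
  have hCL0 : 0 < CL := by positivity
  have hintmeas : Measurable fun r : ℝ => ENNReal.ofReal r *
      ∫⁻ s in Ioi (0:ℝ), ENNReal.ofReal s * Wf k m p q r s := by
    refine (measurable_id.ennreal_ofReal).mul ?_
    apply Measurable.lintegral_prod_right
    exact (measurable_snd.ennreal_ofReal).mul (measurable_Wf k m p q)
  have hmono : ∀ r ∈ Ioi (0:ℝ),
      (Ioi (2:ℝ)).indicator (fun r => ENNReal.ofReal (CL * r ^ B)) r ≤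
      ENNReal.ofReal r * ∫⁻ s in Ioi (0:ℝ), ENNReal.ofReal s * Wf k m p q r s := by
    intro r hr
    by_cases hr2 : (2:ℝ) < r
    · rw [Set.indicator_of_mem (show r ∈ Ioi (2:ℝ) from hr2)]
      have hr0 : (0:ℝ) < r := by linarith
      calc ENNReal.ofReal (CL * r ^ B)
          = ENNReal.ofReal (r * ((r * (r^(2*p) * r^(2*q) *
              (((6:ℝ)^(-(k+3)).natAbs)⁻¹ * (r^2)^(-(k+3))))) * ((3*r)^(-(m:ℤ))))) := by
            rw [hCL, hBdef, phi_ge_eq k m p q hr0]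
        _ = ENNReal.ofReal r * ENNReal.ofReal ((r * (r^(2*p) * r^(2*q) *
              (((6:ℝ)^(-(k+3)).natAbs)⁻¹ * (r^2)^(-(k+3))))) * ((3*r)^(-(m:ℤ)))) :=
            ENNReal.ofReal_mul hr0.le
        _ ≤ ENNReal.ofReal r * ∫⁻ s in Ioi (0:ℝ), ENNReal.ofReal s * Wf k m p q r s :=
            mul_le_mul_right (inner_ge k m p q hm hr2) _
    · rw [Set.indicator_of_notMem (show r ∉ Ioi (2:ℝ) from hr2)]
      exact zero_le
  have le1 : ∫⁻ r in Ioi (2:ℝ), ENNReal.ofReal (CL * r ^ B) ≤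
      ∫⁻ r in Ioi (0:ℝ), ENNReal.ofReal r *
        ∫⁻ s in Ioi (0:ℝ), ENNReal.ofReal s * Wf k m p q r s := by
    rw [← Set.inter_eq_self_of_subset_left (Ioi_subset_Ioi (by norm_num : (0:ℝ) ≤ 2)),
      ← Measure.restrict_restrict measurableSet_Ioi,
      ← lintegral_indicator measurableSet_Ioi]
    exact setLIntegral_mono hintmeas hmono
  have fin2 : ∫⁻ r in Ioi (2:ℝ), ENNReal.ofReal (CL * r ^ B) < ⊤ := lt_of_le_of_lt le1 hfin
  have hnn : 0 ≤ᵐ[volume.restrict (Ioi (2:ℝ))] fun r : ℝ => CL * r ^ B := by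
    filter_upwards [ae_restrict_mem measurableSet_Ioi] with r hr
    have hr0 : (0:ℝ) < r := lt_trans (by norm_num) hr
    positivity
  have intg : IntegrableOn (fun r : ℝ => CL * r ^ B) (Ioi (2:ℝ)) volume :=
    ⟨(Measurable.aestronglyMeasurable (by fun_prop)),
      (hasFiniteIntegral_iff_ofReal hnn).mpr fin2⟩
  have intg2 : IntegrableOn (fun r : ℝ => r ^ B) (Ioi (2:ℝ)) volume := by
    have h := intg.const_mul CL⁻¹
    refine h.congr (ae_of_all _ fun x => ?_)
    simp only [← mul_assoc, inv_mul_cancel₀ hCL0.ne', one_mul]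
  have hBlt : B < -1 := (integrableOn_Ioi_rpow_iff (by norm_num : (0:ℝ) < 2)).mp intg2
  have : ((-1 : ℤ) : ℝ) ≤ B := by
    rw [hBdef]
    exact_mod_cast hB
  push_cast at this
  linarith

/-- the monomial `z^p w^q` is square-integrable on
`Z_m = {|z|²+|w|² > 2, ||z|-|w|| < (|z|+|w|)^{-m}}` with weight
`(1+|z|²+|w|²)^{-(k+3)}` iff `2(p+q) ≤ m + 2k + 2`. -/
theorem stmt_12 (k : ℤ) (m : ℕ) (hm : 2 ≤ m) (p q : ℕ) :
    IntegrableOn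
      (fun zw : ℂ × ℂ =>
        ‖zw.1‖ ^ (2 * p) * ‖zw.2‖ ^ (2 * q) *
          (1 + ‖zw.1‖ ^ 2 + ‖zw.2‖ ^ 2) ^ (-(k + 3)))
      {zw : ℂ × ℂ | 2 < ‖zw.1‖ ^ 2 + ‖zw.2‖ ^ 2 ∧
        |‖zw.1‖ - ‖zw.2‖| < (‖zw.1‖ + ‖zw.2‖) ^ (-(m : ℤ))}
      volume ↔
    2 * ((p : ℤ) + q) ≤ m + 2 * k + 2 := by
  have hS : MeasurableSet {zw : ℂ × ℂ | 2 < ‖zw.1‖ ^ 2 + ‖zw.2‖ ^ 2 ∧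
      |‖zw.1‖ - ‖zw.2‖| < (‖zw.1‖ + ‖zw.2‖) ^ (-(m : ℤ))} := by
    rw [Set.setOf_and]
    refine MeasurableSet.inter ?_ ?_
    · exact measurableSet_lt measurable_const (by fun_prop)
    · exact measurableSet_lt (by fun_prop)
        ((measurable_fst.norm.add measurable_snd.norm).pow_const _)
  have hnn : ∀ zw : ℂ × ℂ, 0 ≤ ‖zw.1‖ ^ (2 * p) * ‖zw.2‖ ^ (2 * q) *
      (1 + ‖zw.1‖ ^ 2 + ‖zw.2‖ ^ 2) ^ (-(k + 3)) := fun zw => by positivity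
  have hcont : Continuous (fun zw : ℂ × ℂ =>
      ‖zw.1‖ ^ (2 * p) * ‖zw.2‖ ^ (2 * q) *
        (1 + ‖zw.1‖ ^ 2 + ‖zw.2‖ ^ 2) ^ (-(k + 3))) := by
    refine Continuous.mul (by fun_prop) ?_
    refine Continuous.zpow₀ (by fun_prop) _ fun zw => Or.inl ?_
    positivity
  have key : IntegrableOn
      (fun zw : ℂ × ℂ =>
        ‖zw.1‖ ^ (2 * p) * ‖zw.2‖ ^ (2 * q) *
          (1 + ‖zw.1‖ ^ 2 + ‖zw.2‖ ^ 2) ^ (-(k + 3)))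
      {zw : ℂ × ℂ | 2 < ‖zw.1‖ ^ 2 + ‖zw.2‖ ^ 2 ∧
        |‖zw.1‖ - ‖zw.2‖| < (‖zw.1‖ + ‖zw.2‖) ^ (-(m : ℤ))} volume ↔
      (∫⁻ zw in {zw : ℂ × ℂ | 2 < ‖zw.1‖ ^ 2 + ‖zw.2‖ ^ 2 ∧
        |‖zw.1‖ - ‖zw.2‖| < (‖zw.1‖ + ‖zw.2‖) ^ (-(m : ℤ))},
        ENNReal.ofReal (‖zw.1‖ ^ (2 * p) * ‖zw.2‖ ^ (2 * q) *
          (1 + ‖zw.1‖ ^ 2 + ‖zw.2‖ ^ 2) ^ (-(k + 3)))) < ⊤ :=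
    ⟨fun h => (hasFiniteIntegral_iff_ofReal (ae_of_all _ hnn)).mp h.2,
     fun h => ⟨hcont.aestronglyMeasurable.restrict,
       (hasFiniteIntegral_iff_ofReal (ae_of_all _ hnn)).mpr h⟩⟩
  have transfer : (∫⁻ zw in {zw : ℂ × ℂ | 2 < ‖zw.1‖ ^ 2 + ‖zw.2‖ ^ 2 ∧
        |‖zw.1‖ - ‖zw.2‖| < (‖zw.1‖ + ‖zw.2‖) ^ (-(m : ℤ))},
        ENNReal.ofReal (‖zw.1‖ ^ (2 * p) * ‖zw.2‖ ^ (2 * q) *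
          (1 + ‖zw.1‖ ^ 2 + ‖zw.2‖ ^ 2) ^ (-(k + 3)))) =
      ENNReal.ofReal (2 * π) * (ENNReal.ofReal (2 * π) *
        ∫⁻ r in Ioi (0:ℝ), ENNReal.ofReal r *
          ∫⁻ s in Ioi (0:ℝ), ENNReal.ofReal s * Wf k m p q r s) := by
    rw [← lintegral_indicator hS]
    have hpt : ∀ zw : ℂ × ℂ,
        ({zw : ℂ × ℂ | 2 < ‖zw.1‖ ^ 2 + ‖zw.2‖ ^ 2 ∧
          |‖zw.1‖ - ‖zw.2‖| < (‖zw.1‖ + ‖zw.2‖) ^ (-(m : ℤ))}).indicator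
          (fun zw => ENNReal.ofReal (‖zw.1‖ ^ (2 * p) * ‖zw.2‖ ^ (2 * q) *
            (1 + ‖zw.1‖ ^ 2 + ‖zw.2‖ ^ 2) ^ (-(k + 3)))) zw =
        Wf k m p q ‖zw.1‖ ‖zw.2‖ := by
      intro zw
      by_cases hzw : zw ∈ {zw : ℂ × ℂ | 2 < ‖zw.1‖ ^ 2 + ‖zw.2‖ ^ 2 ∧
          |‖zw.1‖ - ‖zw.2‖| < (‖zw.1‖ + ‖zw.2‖) ^ (-(m : ℤ))}
      · rw [Set.indicator_of_mem hzw]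
        unfold Wf
        exact (if_pos hzw).symm
      · rw [Set.indicator_of_notMem hzw]
        unfold Wf
        exact (if_neg hzw).symm
    simp_rw [hpt]
    exact lintegral_biradial (Wf k m p q) (measurable_Wf k m p q)
  rw [key, transfer]
  have hiff : (ENNReal.ofReal (2 * π) * (ENNReal.ofReal (2 * π) *
      ∫⁻ r in Ioi (0:ℝ), ENNReal.ofReal r *
        ∫⁻ s in Ioi (0:ℝ), ENNReal.ofReal s * Wf k m p q r s) < ⊤) ↔
      (∫⁻ r in Ioi (0:ℝ), ENNReal.ofReal r *
        ∫⁻ s in Ioi (0:ℝ), ENNReal.ofReal s * Wf k m p q r s) < ⊤ := by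
    have h2pi : ENNReal.ofReal (2 * π) ≠ 0 := by
      simp [ENNReal.ofReal_eq_zero, not_le]
      positivity
    constructor
    · intro h
      by_contra hI
      rw [not_lt, top_le_iff] at hI
      rw [hI, ENNReal.mul_top h2pi, ENNReal.mul_top h2pi] at h
      exact absurd h (lt_irrefl _)
    · intro h
      exact ENNReal.mul_lt_top ENNReal.ofReal_lt_top
        (ENNReal.mul_lt_top ENNReal.ofReal_lt_top h)
  rw [hiff]
  constructor
  · intro h
    by_contra hc
    exact I_eq_top k m p q hm (by omega) h
  · intro h
    exact I_lt_top k m p q hm (by omega)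
end
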